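/- Let L be any normal modal logic with the universal modality such that K_u ⊆ L ⊆ K4_u, and let ψ(𝔟) = (AxP ∧ ∃ε(s,α^1_m,α^2_n)) → ∃ε(t,α^1_k,α^2_l) for a configuration 𝔟 = ⟨t,k,l⟩. If P : 𝔞 ↛ 𝔟 (𝔟 is not reachable from 𝔞 = ⟨s,m,n⟩), then ψ(𝔟) is not unifiable in L: for every substitution σ, σ(ψ(𝔟)) ∉ L. -/

import Mathlib

/-- Modal formulas with a box □ and the universal modality ∀ (ubox). -/
inductive MFU : Type where
  | var : Nat → MFU
  | bot : MFU
  | neg : MFU → MFU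
  | and : MFU → MFU → MFU
  | box : MFU → MFU
  | ubox : MFU → MFU

namespace MFU
def top : MFU := neg bot
def or (φ ψ : MFU) : MFU := neg (and (neg φ) (neg ψ))
def imp (φ ψ : MFU) : MFU := or (neg φ) ψ
def dia (φ : MFU) : MFU := neg (box (neg φ))
/-- ∃φ, the universal diamond. -/
def uEx (φ : MFU) : MFU := neg (ubox (neg φ))
def subst (σ : Nat → MFU) : MFU → MFU
  | .var n => σ n
  | .bot => .bot
  | .neg φ => .neg (subst σ φ)
  | .and φ ψ => .and (subst σ φ) (subst σ ψ)
  | .box φ => .box (subst σ φ)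
  | .ubox φ => .ubox (subst σ φ)
end MFU

/-- Truth at a point of a Kripke model, with ∀ interpreted by W × W. -/
def satU {W : Type} (R : W → W → Prop) (V : Nat → W → Prop) : W → MFU → Prop
  | x, .var n => V n x
  | _, .bot => False
  | x, .neg φ => ¬ satU R V x φ
  | x, .and φ ψ => satU R V x φ ∧ satU R V x ψ
  | x, .box φ => ∀ y, R x y → satU R V y φ
  | _, .ubox φ => ∀ y, satU R V y φ
namespace MFU
/- The variable-free Chagrov formulas (in the language with the universal modality). -/
def fα : MFU := and (dia top) (box (dia top))
def fβ : MFU := box bot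
def fγ : MFU := and (dia fα) (and (dia fβ) (neg (dia (dia fβ))))
def fδ : MFU := and (neg fγ) (and (dia fβ) (neg (dia (dia fβ))))
def fδ₁ : MFU := and (dia fδ) (neg (dia (dia fδ)))
def fδ₂ : MFU := and (dia fδ₁) (neg (dia (dia fδ₁)))
def fγ₁ : MFU := and (dia fγ) (and (neg (dia (dia fγ))) (neg (dia fδ)))
def fγ₂ : MFU := and (dia fγ₁) (and (neg (dia (dia fγ₁))) (neg (dia fδ)))
def α₀ : Nat → MFU
  | 0 => and (dia fγ) (and (dia fδ) (and (neg (dia (dia fγ))) (neg (dia (dia fδ)))))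
  | 1 => and (dia fγ₁) (and (dia fδ₁) (and (neg (dia (dia fγ₁))) (neg (dia (dia fδ₁)))))
  | 2 => and (dia fγ₂) (and (dia fδ₂) (and (neg (dia (dia fγ₂))) (neg (dia (dia fδ₂)))))
  | _ => bot
def others (i : Nat) : MFU :=
  ((((List.range 3).filter (· ≠ i))).map (fun k => neg (dia (α₀ k)))).foldr MFU.and MFU.top
def alpha (i : Nat) : Nat → MFU
  | 0 => α₀ i
  | (j+1) => and (dia (α₀ i)) (and (dia (alpha i j)) (and (neg (dia (dia (alpha i j)))) (others i)))
/-- ε(t,φ,ψ) = ◇α^0_t ∧ ¬◇α^0_{t+1} ∧ ◇φ ∧ ¬◇◇φ ∧ ◇ψ ∧ ¬◇◇ψ. -/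
def eps (t : Nat) (φ ψ : MFU) : MFU :=
  and (dia (alpha 0 t)) (and (neg (dia (alpha 0 (t+1))))
    (and (dia φ) (and (neg (dia (dia φ))) (and (dia ψ) (neg (dia (dia ψ)))))))
/-- π₁ (with p₁ = var 0). -/
def π₁ : MFU :=
  and (or (dia (α₀ 1)) (α₀ 1)) (and (neg (dia (α₀ 0))) (and (neg (dia (α₀ 2)))
    (and (var 0) (neg (dia (var 0))))))
/-- π₂ (with p₁ = var 0). -/
def π₂ : MFU :=
  and (dia (α₀ 1)) (and (neg (dia (α₀ 0))) (and (neg (dia (α₀ 2)))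
    (and (dia (var 0)) (neg (dia (dia (var 0)))))))
/-- τ₁ (with p₂ = var 1). -/
def τ₁ : MFU :=
  and (or (dia (α₀ 2)) (α₀ 2)) (and (neg (dia (α₀ 0))) (and (neg (dia (α₀ 1)))
    (and (var 1) (neg (dia (var 1))))))
/-- τ₂ (with p₂ = var 1). -/
def τ₂ : MFU :=
  and (dia (α₀ 2)) (and (neg (dia (α₀ 0))) (and (neg (dia (α₀ 1)))
    (and (dia (var 1)) (neg (dia (dia (var 1)))))))
end MFU
/-- Instructions of a Minsky (two-register) machine. -/
inductive Instr : Type where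
  | inc1 (s t : Nat)            -- s → ⟨t,1,0⟩
  | inc2 (s t : Nat)            -- s → ⟨t,0,1⟩
  | dec1 (s t t' : Nat)         -- s → ⟨t,-1,0⟩(⟨t',0,0⟩)
  | dec2 (s t t' : Nat)         -- s → ⟨t,0,-1⟩(⟨t',0,0⟩)
deriving DecidableEq

abbrev Config := Nat × Nat × Nat

def Instr.src : Instr → Nat
  | .inc1 s _ => s
  | .inc2 s _ => s
  | .dec1 s _ _ => s
  | .dec2 s _ _ => s

/-- One-step transformation of configurations by an instruction. -/
def Instr.Step : Instr → Config → Config → Prop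
  | .inc1 s t, (s₁, m, n), c => s₁ = s ∧ c = (t, m+1, n)
  | .inc2 s t, (s₁, m, n), c => s₁ = s ∧ c = (t, m, n+1)
  | .dec1 s t t', (s₁, m, n), c =>
      s₁ = s ∧ ((m ≠ 0 ∧ c = (t, m-1, n)) ∨ (m = 0 ∧ c = (t', 0, n)))
  | .dec2 s t t', (s₁, m, n), c =>
      s₁ = s ∧ ((n ≠ 0 ∧ c = (t, m, n-1)) ∨ (n = 0 ∧ c = (t', m, 0)))

/-- P : 𝔞 → 𝔟 : reachability in finitely many (possibly zero) steps. -/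
def Reach (P : List Instr) : Config → Config → Prop :=
  Relation.ReflTransGen (fun c c' => ∃ I ∈ P, I.Step c c')

/-- At most one instruction with a given state on the left-hand side. -/
def Deterministic (P : List Instr) : Prop :=
  ∀ I ∈ P, ∀ J ∈ P, I.src = J.src → I = J
/-- The points of the frame 𝔉 of Fig. 1. -/
inductive Pt : Type where
  | a | b | g | g1 | g2 | d | d1 | d2
  | chain (i j : Nat)          -- the point a^i_j
  | e (t k l : Nat)            -- the point e(t,k,l)
deriving DecidableEq

/-- Membership in the frame: e(t,k,l) exists only for reachable configurations. -/
def Pt.Ok (P : List Instr) (c₀ : Config) : Pt → Prop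
  | .chain i _ => i ≤ 2
  | .e t k l => Reach P c₀ (t, k, l)
  | _ => True

/-- The base relation whose transitive closure is the accessibility relation of 𝔉. -/
def Pt.R0 : Pt → Pt → Prop
  | .a, .a => True
  | .g, .a => True
  | .g, .b => True
  | .d, .b => True
  | .g1, .g => True
  | .g2, .g1 => True
  | .d1, .d => True
  | .d2, .d1 => True
  | .chain 0 0, .g => True
  | .chain 0 0, .d => True
  | .chain 1 0, .g1 => True
  | .chain 1 0, .d1 => True
  | .chain 2 0, .g2 => True
  | .chain 2 0, .d2 => True
  | .chain i (j+1), .chain i' j' => i = i' ∧ j = j'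
  | .e t _ _, .chain 0 t' => t = t'
  | .e _ k _, .chain 1 k' => k = k'
  | .e _ _ l, .chain 2 l' => l = l'
  | _, _ => False

/-- The carrier of the frame 𝔉 built from P and 𝔞 = c₀. -/
def FW (P : List Instr) (c₀ : Config) : Type := {p : Pt // Pt.Ok P c₀ p}

/-- The accessibility relation of 𝔉: the transitive closure of R0. -/
def FR (P : List Instr) (c₀ : Config) : FW P c₀ → FW P c₀ → Prop :=
  fun x y => Relation.TransGen Pt.R0 x.1 y.1
/-- The formula AxI associated with an instruction I. -/
def AxI : Instr → MFU
  | .inc1 t t' => MFU.imp (MFU.uEx (MFU.eps t MFU.π₁ MFU.τ₁)) (MFU.uEx (MFU.eps t' MFU.π₂ MFU.τ₁))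
  | .inc2 t t' => MFU.imp (MFU.uEx (MFU.eps t MFU.π₁ MFU.τ₁)) (MFU.uEx (MFU.eps t' MFU.π₁ MFU.τ₂))
  | .dec1 t t' t'' =>
      MFU.and (MFU.imp (MFU.uEx (MFU.eps t MFU.π₂ MFU.τ₁)) (MFU.uEx (MFU.eps t' MFU.π₁ MFU.τ₁)))
        (MFU.imp (MFU.uEx (MFU.eps t (MFU.α₀ 1) MFU.τ₁)) (MFU.uEx (MFU.eps t'' (MFU.α₀ 1) MFU.τ₁)))
  | .dec2 t t' t'' =>
      MFU.and (MFU.imp (MFU.uEx (MFU.eps t MFU.π₁ MFU.τ₂)) (MFU.uEx (MFU.eps t' MFU.π₁ MFU.τ₁)))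
        (MFU.imp (MFU.uEx (MFU.eps t MFU.π₁ (MFU.α₀ 2))) (MFU.uEx (MFU.eps t'' MFU.π₁ (MFU.α₀ 2))))

/-- AxP = ⋀_{I ∈ P} AxI. -/
def AxP (P : List Instr) : MFU := (P.map AxI).foldr MFU.and MFU.top

/-- K_u: the formulas valid in all frames. -/
def Ku : Set MFU :=
  {φ | ∀ (W : Type) (R : W → W → Prop) (V : Nat → W → Prop) (x : W), satU R V x φ}

/-- K4_u: the formulas valid in all transitive frames. -/
def K4u : Set MFU :=
  {φ | ∀ (W : Type) (R : W → W → Prop), Transitive R →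
    ∀ (V : Nat → W → Prop) (x : W), satU R V x φ}

/-- ψ(𝔟) = (AxP ∧ ∃ε(s,α^1_m,α^2_n)) → ∃ε(t,α^1_k,α^2_l). -/
def psiB (P : List Instr) (s m n t k l : Nat) : MFU :=
  MFU.imp (MFU.and (AxP P) (MFU.uEx (MFU.eps s (MFU.alpha 1 m) (MFU.alpha 2 n))))
    (MFU.uEx (MFU.eps t (MFU.alpha 1 k) (MFU.alpha 2 l)))

/-!
Since `L ⊆ K4u`, it suffices to refute `σ(ψ(𝔟))` in one transitive frame, the frame 𝔉 = `FR`
on `FW` built from `P` and `𝔞`; and since truth of `σ(ψ)` under `V` is truth of `ψ` under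
`n ↦ ⟦σ n⟧_V`, we have to refute `ψ(𝔟)` itself under every valuation of 𝔉.

The variable-free formulas name points of 𝔉: `α^i_j` holds exactly at `a^i_j`. If `A` holds only
on the chain `a^1` and `B` only on `a^2`, then `ε(t, A, B)` holds exactly at the points
`e(t, k, l)` for which `k` and `l` are the least indices at which `A` and `B` hold on their chains.
Whatever the valuation, the indices at which `π₂` holds are those of `π₁` shifted by one (likewise
for `τ₂` and `τ₁`). So the premise of each `AxI` describes a point `e(c)` and its conclusion the
point `e(c')` of the successor configuration, which lies in 𝔉 because 𝔉 contains `e(c)` exactly for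
the configurations `c` reachable from `𝔞`. Hence `AxP` is valid in 𝔉 and `∃ε(s, α^1_m, α^2_n)`
holds at `e(s, m, n)`, while `∃ε(t, α^1_k, α^2_l)` would need the point `e(t, k, l)`, which is
absent as `𝔟` is not reachable.
-/

open Relation

@[simp] lemma Nat.forall_le_iff_eq_zero {j : ℕ} : (∀ x, j ≤ x) ↔ j = 0 :=
  ⟨fun h => Nat.le_zero.1 (h 0), fun h x => h ▸ x.zero_le⟩

@[simp] lemma Nat.not_forall_lt {j : ℕ} : ¬ ∀ x, j < x := fun h => (h 0).not_ge j.zero_le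

@[simp] lemma Nat.forall_lt_imp_le_iff {j n : ℕ} : (∀ x < j, x ≤ n) ↔ j ≤ n + 1 :=
  ⟨fun h => by by_contra hj; have := h (n + 1) (by omega); omega, fun h x hx => by omega⟩

@[simp] lemma Nat.forall_lt_imp_eq_zero_iff {j : ℕ} : (∀ x < j, x = 0) ↔ j ≤ 1 := by
  simpa using Nat.forall_lt_imp_le_iff (j := j) (n := 0)

@[simp] lemma exists_le_and_lt_iff {α : Type*} [Preorder α] {a c : α} :
    (∃ b ≤ c, a < b) ↔ a < c :=
  ⟨fun ⟨_, hb, hab⟩ => hab.trans_le hb, fun h => ⟨c, le_rfl, h⟩⟩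

lemma isLeast_iff_exists_le_forall_lt {α : Type*} [LinearOrder α] {S : Set α} {c : α} :
    IsLeast S c ↔ (∃ j ≤ c, j ∈ S) ∧ ∀ j < c, j ∉ S := by
  refine ⟨fun h => ⟨⟨c, le_rfl, h.1⟩, fun j hj hS => (h.2 hS).not_gt hj⟩, ?_⟩
  rintro ⟨⟨j, hjc, hj⟩, h⟩
  obtain rfl : j = c := eq_of_le_of_not_lt hjc fun hlt => h j hlt hj
  exact ⟨hj, fun x hx => not_lt.1 fun hlt => h x hlt hx⟩

lemma isLeast_image_add_one {S : Set ℕ} {k : ℕ} : IsLeast ((· + 1) '' S) (k + 1) ↔ IsLeast S k :=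
  (strictMono_id.add_const 1).map_isLeast

section Semantics

variable {W : Type} {R : W → W → Prop} {V : ℕ → W → Prop} {x : W} {φ ψ : MFU}

@[simp] lemma satU_bot : ¬ satU R V x .bot := id

@[simp] lemma satU_neg : satU R V x (.neg φ) ↔ ¬ satU R V x φ := Iff.rfl

@[simp] lemma satU_and : satU R V x (.and φ ψ) ↔ satU R V x φ ∧ satU R V x ψ := Iff.rfl

@[simp] lemma satU_top : satU R V x .top := by simp [MFU.top, satU]

@[simp] lemma satU_or : satU R V x (.or φ ψ) ↔ satU R V x φ ∨ satU R V x ψ := by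
  simp [MFU.or, satU]; tauto

@[simp] lemma satU_imp : satU R V x (.imp φ ψ) ↔ (satU R V x φ → satU R V x ψ) := by
  simp [MFU.imp, satU]; tauto

@[simp] lemma satU_uEx : satU R V x (.uEx φ) ↔ ∃ y, satU R V y φ := by
  simp [MFU.uEx, satU]

lemma satU_dia : satU R V x (.dia φ) ↔ ∃ y, R x y ∧ satU R V y φ := by
  simp [MFU.dia, satU]

lemma satU_dia_of_dia_dia (hR : Transitive R) (h : satU R V x (.dia (.dia φ))) :
    satU R V x (.dia φ) := by
  obtain ⟨y, hxy, hy⟩ := satU_dia.1 h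
  obtain ⟨z, hyz, hz⟩ := satU_dia.1 hy
  exact satU_dia.2 ⟨z, hR hxy hyz, hz⟩

lemma satU_foldr_and {L : List MFU} :
    satU R V x (L.foldr .and .top) ↔ ∀ φ ∈ L, satU R V x φ := by
  induction L with
  | nil => simp
  | cons φ L ih => simp [ih]

lemma satU_subst {σ : ℕ → MFU} :
    satU R V x (φ.subst σ) ↔ satU R (fun n y => satU R V y (σ n)) x φ := by
  induction φ generalizing x <;> simp_all [MFU.subst, satU]

end Semantics

namespace Pt

@[simp] lemma r0_a {y : Pt} : R0 .a y ↔ y = .a := by cases y <;> simp [R0]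
@[simp] lemma r0_b {y : Pt} : ¬ R0 .b y := by cases y <;> simp [R0]
@[simp] lemma r0_g {y : Pt} : R0 .g y ↔ y = .a ∨ y = .b := by cases y <;> simp [R0]
@[simp] lemma r0_d {y : Pt} : R0 .d y ↔ y = .b := by cases y <;> simp [R0]
@[simp] lemma r0_g1 {y : Pt} : R0 .g1 y ↔ y = .g := by cases y <;> simp [R0]
@[simp] lemma r0_d1 {y : Pt} : R0 .d1 y ↔ y = .d := by cases y <;> simp [R0]
@[simp] lemma r0_g2 {y : Pt} : R0 .g2 y ↔ y = .g1 := by cases y <;> simp [R0]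
@[simp] lemma r0_d2 {y : Pt} : R0 .d2 y ↔ y = .d1 := by cases y <;> simp [R0]

@[simp] lemma r0_chain_zero_zero {y : Pt} : R0 (.chain 0 0) y ↔ y = .g ∨ y = .d := by
  cases y <;> simp [R0]

@[simp] lemma r0_chain_one_zero {y : Pt} : R0 (.chain 1 0) y ↔ y = .g1 ∨ y = .d1 := by
  cases y <;> simp [R0]

@[simp] lemma r0_chain_two_zero {y : Pt} : R0 (.chain 2 0) y ↔ y = .g2 ∨ y = .d2 := by
  cases y <;> simp [R0]

@[simp] lemma r0_chain_succ {i j : ℕ} {y : Pt} : R0 (.chain i (j + 1)) y ↔ y = .chain i j := by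
  cases y <;> simp [R0, eq_comm]

@[simp] lemma r0_e {t k l : ℕ} {y : Pt} :
    R0 (.e t k l) y ↔ y = .chain 0 t ∨ y = .chain 1 k ∨ y = .chain 2 l := by
  cases y with
  | chain i j => rcases i with _ | _ | _ | i <;> simp [R0, eq_comm]
  | _ => simp [R0]

lemma transGen_r0_iff {x y : Pt} :
    TransGen R0 x y ↔ ∃ z, R0 x z ∧ (y = z ∨ TransGen R0 z y) := by
  rw [TransGen.head'_iff]
  simp only [reflTransGen_iff_eq_or_transGen]

@[simp] lemma transGen_a {y : Pt} : TransGen R0 .a y ↔ y = .a := by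
  refine ⟨fun h => ?_, by rintro rfl; exact .single (r0_a.2 rfl)⟩
  induction h with
  | single h => exact r0_a.1 h
  | tail _ h ih => subst ih; exact r0_a.1 h

@[simp] lemma transGen_b {y : Pt} : ¬ TransGen R0 .b y := by rw [transGen_r0_iff]; simp

@[simp] lemma transGen_g {y : Pt} : TransGen R0 .g y ↔ y = .a ∨ y = .b := by
  rw [transGen_r0_iff]; simp

@[simp] lemma transGen_d {y : Pt} : TransGen R0 .d y ↔ y = .b := by rw [transGen_r0_iff]; simp

@[simp] lemma transGen_g1 {y : Pt} : TransGen R0 .g1 y ↔ y = .g ∨ y = .a ∨ y = .b := by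
  rw [transGen_r0_iff]; simp

@[simp] lemma transGen_d1 {y : Pt} : TransGen R0 .d1 y ↔ y = .d ∨ y = .b := by
  rw [transGen_r0_iff]; simp

@[simp] lemma transGen_g2 {y : Pt} :
    TransGen R0 .g2 y ↔ y = .g1 ∨ y = .g ∨ y = .a ∨ y = .b := by
  rw [transGen_r0_iff]; simp

@[simp] lemma transGen_d2 {y : Pt} : TransGen R0 .d2 y ↔ y = .d1 ∨ y = .d ∨ y = .b := by
  rw [transGen_r0_iff]; simp

lemma transGen_chain_succ {i j : ℕ} {y : Pt} :
    TransGen R0 (.chain i (j + 1)) y ↔ y = .chain i j ∨ TransGen R0 (.chain i j) y := by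
  rw [transGen_r0_iff]; simp

lemma transGen_chain {i j : ℕ} {y : Pt} :
    TransGen R0 (.chain i j) y ↔ (∃ j' < j, y = .chain i j') ∨ TransGen R0 (.chain i 0) y := by
  induction j with
  | zero => simp
  | succ j ih =>
    rw [transGen_chain_succ, ih]
    constructor
    · rintro (rfl | ⟨j', hj', rfl⟩ | h)
      · exact .inl ⟨j, by omega, rfl⟩
      · exact .inl ⟨j', by omega, rfl⟩
      · exact .inr h
    · rintro (⟨j', hj', rfl⟩ | h)
      · rcases Nat.lt_succ_iff_lt_or_eq.1 hj' with h | rfl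
        · exact .inr (.inl ⟨j', h, rfl⟩)
        · exact .inl rfl
      · exact .inr (.inr h)

@[simp] lemma transGen_chain_zero {j : ℕ} {y : Pt} :
    TransGen R0 (.chain 0 j) y ↔
      (∃ j' < j, y = .chain 0 j') ∨ y = .g ∨ y = .d ∨ y = .a ∨ y = .b := by
  rw [transGen_chain, transGen_r0_iff]; simp; aesop

@[simp] lemma transGen_chain_one {j : ℕ} {y : Pt} :
    TransGen R0 (.chain 1 j) y ↔ (∃ j' < j, y = .chain 1 j') ∨
      y = .g1 ∨ y = .d1 ∨ y = .g ∨ y = .d ∨ y = .a ∨ y = .b := by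
  rw [transGen_chain, transGen_r0_iff]; simp; aesop

@[simp] lemma transGen_chain_two {j : ℕ} {y : Pt} :
    TransGen R0 (.chain 2 j) y ↔ (∃ j' < j, y = .chain 2 j') ∨
      y = .g2 ∨ y = .d2 ∨ y = .g1 ∨ y = .d1 ∨ y = .g ∨ y = .d ∨ y = .a ∨ y = .b := by
  rw [transGen_chain, transGen_r0_iff]; simp; aesop

@[simp] lemma transGen_e {t k l : ℕ} {y : Pt} :
    TransGen R0 (.e t k l) y ↔ (∃ j ≤ t, y = .chain 0 j) ∨ (∃ j ≤ k, y = .chain 1 j) ∨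
      (∃ j ≤ l, y = .chain 2 j) ∨
        y = .g2 ∨ y = .d2 ∨ y = .g1 ∨ y = .d1 ∨ y = .g ∨ y = .d ∨ y = .a ∨ y = .b := by
  rw [transGen_r0_iff]
  simp [le_iff_lt_or_eq]
  aesop

variable {P : List Instr} {c₀ : Config}

lemma ok_of_r0 {p q : Pt} (hp : Ok P c₀ p) (h : R0 p q) : Ok P c₀ q := by
  unfold R0 at h
  split at h <;> simp_all [Ok]

lemma ok_of_transGen {p q : Pt} (hp : Ok P c₀ p) (h : TransGen R0 p q) : Ok P c₀ q := by
  induction h with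
  | single h => exact ok_of_r0 hp h
  | tail _ h ih => exact ok_of_r0 ih h

lemma ok_chain {i j : ℕ} (hi : i ≤ 2) : Ok P c₀ (.chain i j) := hi

lemma chain_index {i j : ℕ} (h : Ok P c₀ (.chain i j)) : i = 0 ∨ i = 1 ∨ i = 2 := by
  simp only [Ok] at h
  omega

end Pt

section Frame

variable {P : List Instr} {c₀ : Config} {V : ℕ → FW P c₀ → Prop}

/-- `⟨p, hp⟩` has type `Subtype _`, which `simp` does not identify with `FW P c₀`, just as it does
not read a proof of `i ≤ 2` as one of `Pt.Ok P c₀ (.chain i j)`: points are built with `FW.mk`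
from proofs stated with `Pt.Ok` (see `chainPt`). -/
def FW.mk (p : Pt) (hp : Pt.Ok P c₀ p) : FW P c₀ := ⟨p, hp⟩

@[elab_as_elim] lemma FW.ind {Q : FW P c₀ → Prop} (h : ∀ p hp, Q (FW.mk p hp)) (x : FW P c₀) :
    Q x :=
  h x.1 x.2

abbrev chainPt (i j : ℕ) (hi : i ≤ 2) : FW P c₀ := FW.mk (.chain i j) (Pt.ok_chain hi)

lemma transitive_FR : Transitive (FR P c₀) := fun _ _ _ => TransGen.trans

@[simp] lemma sat_mk_dia {p : Pt} {hp : Pt.Ok P c₀ p} {φ : MFU} :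
    satU (FR P c₀) V (FW.mk p hp) (.dia φ) ↔
      ∃ q, ∃ h : TransGen Pt.R0 p q, satU (FR P c₀) V (FW.mk q (Pt.ok_of_transGen hp h)) φ := by
  rw [satU_dia]
  exact ⟨fun ⟨y, hy, h⟩ => ⟨y.1, hy, h⟩, fun ⟨_, hq, h⟩ => ⟨FW.mk _ _, hq, h⟩⟩

@[simp] lemma sat_mk_box {p : Pt} {hp : Pt.Ok P c₀ p} {φ : MFU} :
    satU (FR P c₀) V (FW.mk p hp) (.box φ) ↔
      ∀ q, ∀ h : TransGen Pt.R0 p q, satU (FR P c₀) V (FW.mk q (Pt.ok_of_transGen hp h)) φ :=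
  ⟨fun h _ hq => h _ hq, fun h y hy => h y.1 hy⟩

attribute [local simp] or_and_right exists_or or_imp forall_and

lemma sat_fα {p : Pt} (hp : Pt.Ok P c₀ p) : satU (FR P c₀) V (FW.mk p hp) .fα ↔ p = .a := by
  cases p with
  | chain i j => obtain rfl | rfl | rfl := Pt.chain_index hp <;> simp [MFU.fα]
  | _ => simp [MFU.fα]

lemma sat_fβ {p : Pt} (hp : Pt.Ok P c₀ p) : satU (FR P c₀) V (FW.mk p hp) .fβ ↔ p = .b := by
  cases p with
  | chain i j => obtain rfl | rfl | rfl := Pt.chain_index hp <;> simp [MFU.fβ]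
  | _ => simp [MFU.fβ]

lemma sat_fγ {p : Pt} (hp : Pt.Ok P c₀ p) : satU (FR P c₀) V (FW.mk p hp) .fγ ↔ p = .g := by
  cases p with
  | chain i j => obtain rfl | rfl | rfl := Pt.chain_index hp <;> simp [MFU.fγ, sat_fα, sat_fβ]
  | _ => simp [MFU.fγ, sat_fα, sat_fβ]

lemma sat_fδ {p : Pt} (hp : Pt.Ok P c₀ p) : satU (FR P c₀) V (FW.mk p hp) .fδ ↔ p = .d := by
  cases p with
  | chain i j => obtain rfl | rfl | rfl := Pt.chain_index hp <;> simp [MFU.fδ, sat_fγ, sat_fβ]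
  | _ => simp [MFU.fδ, sat_fγ, sat_fβ]

lemma sat_fγ₁ {p : Pt} (hp : Pt.Ok P c₀ p) : satU (FR P c₀) V (FW.mk p hp) .fγ₁ ↔ p = .g1 := by
  cases p with
  | chain i j => obtain rfl | rfl | rfl := Pt.chain_index hp <;> simp [MFU.fγ₁, sat_fγ, sat_fδ]
  | _ => simp [MFU.fγ₁, sat_fγ, sat_fδ]

lemma sat_fδ₁ {p : Pt} (hp : Pt.Ok P c₀ p) :
    satU (FR P c₀) V (FW.mk p hp) .fδ₁ ↔ p = .d1 ∨ p = .chain 0 0 := by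
  cases p with
  | chain i j => obtain rfl | rfl | rfl := Pt.chain_index hp <;> simp [MFU.fδ₁, sat_fδ]
  | _ => simp [MFU.fδ₁, sat_fδ]

lemma sat_fγ₂ {p : Pt} (hp : Pt.Ok P c₀ p) : satU (FR P c₀) V (FW.mk p hp) .fγ₂ ↔ p = .g2 := by
  cases p with
  | chain i j => obtain rfl | rfl | rfl := Pt.chain_index hp <;> simp [MFU.fγ₂, sat_fγ₁, sat_fδ]
  | _ => simp [MFU.fγ₂, sat_fγ₁, sat_fδ]

lemma sat_fδ₂ {p : Pt} (hp : Pt.Ok P c₀ p) :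
    satU (FR P c₀) V (FW.mk p hp) .fδ₂ ↔ p = .d2 ∨ p = .chain 1 0 ∨ p = .chain 0 1 := by
  cases p with
  | chain i j =>
    obtain rfl | rfl | rfl := Pt.chain_index hp <;> simp [MFU.fδ₂, sat_fδ₁]
    omega
  | _ => simp [MFU.fδ₂, sat_fδ₁]

lemma sat_α₀ {p : Pt} (hp : Pt.Ok P c₀ p) (i : ℕ) :
    satU (FR P c₀) V (FW.mk p hp) (.α₀ i) ↔ p = .chain i 0 := by
  match i with
  | 0 | 1 | 2 =>
    cases p with
    | chain i j =>
      obtain rfl | rfl | rfl := Pt.chain_index hp <;>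
        simp [MFU.α₀, sat_fγ, sat_fδ, sat_fγ₁, sat_fδ₁, sat_fγ₂, sat_fδ₂]
    | _ => simp [MFU.α₀, sat_fγ, sat_fδ, sat_fγ₁, sat_fδ₁, sat_fγ₂, sat_fδ₂]
  | i + 3 =>
    simp only [MFU.α₀, satU_bot, false_iff]
    rintro rfl
    simp [Pt.Ok] at hp

lemma sat_alpha (i j : ℕ) {p : Pt} (hp : Pt.Ok P c₀ p) :
    satU (FR P c₀) V (FW.mk p hp) (.alpha i j) ↔ p = .chain i j := by
  induction j generalizing p with
  | zero => exact sat_α₀ hp i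
  | succ j ih =>
    match i with
    | 0 | 1 | 2 =>
      cases p with
      | chain i j =>
        obtain rfl | rfl | rfl := Pt.chain_index hp <;>
          simp [MFU.alpha, MFU.others, List.range_succ, ih, sat_α₀]
        omega
      | _ => simp [MFU.alpha, MFU.others, List.range_succ, ih, sat_α₀]
    | i + 3 =>
      have hp' : p ≠ .chain (i + 3) (j + 1) := by rintro rfl; simp [Pt.Ok] at hp
      simp only [MFU.alpha, satU_and, sat_mk_dia, sat_α₀, hp', iff_false]
      rintro ⟨⟨q, hq, rfl⟩, -⟩
      exact absurd (Pt.ok_of_transGen hp hq) (by simp [Pt.Ok])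

variable (V) in
def chainIdx (i : ℕ) (A : MFU) : Set ℕ :=
  {j | ∃ h : Pt.Ok P c₀ (.chain i j), satU (FR P c₀) V (FW.mk _ h) A}

variable (V) in
def OnChain (i : ℕ) (A : MFU) : Prop :=
  ∀ q hq, satU (FR P c₀) V (FW.mk q hq) A → ∃ j, q = .chain i j

lemma mem_chainIdx {i j : ℕ} (hi : i ≤ 2) {A : MFU} :
    j ∈ chainIdx V i A ↔ satU (FR P c₀) V (chainPt i j hi) A :=
  ⟨fun ⟨_, h⟩ => h, fun h => ⟨_, h⟩⟩

lemma isLeast_chainIdx_alpha {i j c : ℕ} (hi : i ≤ 2) :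
    IsLeast (chainIdx V i (.alpha i j)) c ↔ c = j := by
  have : chainIdx V i (.alpha i j) = {j} := by
    ext j'
    simp [mem_chainIdx hi, sat_alpha]
  rw [this]
  exact ⟨fun h => (isLeast_singleton.unique h).symm, fun h => h ▸ isLeast_singleton⟩

lemma onChain_alpha (i j : ℕ) : OnChain V i (.alpha i j) :=
  fun _ hq h => ⟨j, (sat_alpha i j hq).1 h⟩

lemma exists_eq_chain_of_sat {i : ℕ} (hi : i = 1 ∨ i = 2) {p : Pt} {hp : Pt.Ok P c₀ p}
    (h : satU (FR P c₀) V (FW.mk p hp) (.dia (.α₀ i)) ∨ satU (FR P c₀) V (FW.mk p hp) (.α₀ i))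
    (h₀ : ¬ satU (FR P c₀) V (FW.mk p hp) (.dia (.α₀ 0))) : ∃ j, p = .chain i j := by
  rcases hi with rfl | rfl <;>
  cases p with
  | chain i j => obtain rfl | rfl | rfl := Pt.chain_index hp <;> simp_all [sat_α₀]
  | _ => simp_all [sat_α₀]

lemma onChain_π₁ : OnChain V 1 .π₁ :=
  fun _ _ h => exists_eq_chain_of_sat (.inl rfl) (satU_or.1 h.1) h.2.1

lemma onChain_π₂ : OnChain V 1 .π₂ :=
  fun _ _ h => exists_eq_chain_of_sat (.inl rfl) (.inl h.1) h.2.1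

lemma onChain_τ₁ : OnChain V 2 .τ₁ :=
  fun _ _ h => exists_eq_chain_of_sat (.inr rfl) (satU_or.1 h.1) h.2.1

lemma onChain_τ₂ : OnChain V 2 .τ₂ :=
  fun _ _ h => exists_eq_chain_of_sat (.inr rfl) (.inl h.1) h.2.1

lemma sat_dia_chain_succ {i j : ℕ} (hi : i ≤ 2) {φ : MFU} :
    satU (FR P c₀) V (chainPt i (j + 1) hi) (.dia φ) ↔
      satU (FR P c₀) V (chainPt i j hi) φ ∨ satU (FR P c₀) V (chainPt i j hi) (.dia φ) := by
  simp only [sat_mk_dia, Pt.transGen_chain_succ]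
  constructor
  · rintro ⟨q, rfl | h, hq⟩
    · exact .inl hq
    · exact .inr ⟨q, h, hq⟩
  · rintro (h | ⟨q, hq, h⟩)
    · exact ⟨_, .inl rfl, h⟩
    · exact ⟨q, .inr hq, h⟩

lemma sat_dia_dia_chain_succ {i j : ℕ} (hi : i ≤ 2) {φ : MFU} :
    satU (FR P c₀) V (chainPt i (j + 1) hi) (.dia (.dia φ)) ↔
      satU (FR P c₀) V (chainPt i j hi) (.dia φ) := by
  rw [sat_dia_chain_succ, or_iff_left_of_imp (satU_dia_of_dia_dia transitive_FR)]

lemma sat_π₂_chain_succ {j : ℕ} :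
    satU (FR P c₀) V (chainPt 1 (j + 1) one_le_two) .π₂ ↔
      satU (FR P c₀) V (chainPt 1 j one_le_two) .π₁ := by
  simp only [MFU.π₁, MFU.π₂, satU_and, satU_neg, satU_or]
  rw [sat_dia_dia_chain_succ]
  simp only [sat_dia_chain_succ]
  simp only [chainPt, sat_α₀, Pt.chain.injEq]
  tauto

lemma sat_τ₂_chain_succ {j : ℕ} :
    satU (FR P c₀) V (chainPt 2 (j + 1) le_rfl) .τ₂ ↔
      satU (FR P c₀) V (chainPt 2 j le_rfl) .τ₁ := by
  simp only [MFU.τ₁, MFU.τ₂, satU_and, satU_neg, satU_or]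
  rw [sat_dia_dia_chain_succ]
  simp only [sat_dia_chain_succ]
  simp only [chainPt, sat_α₀, Pt.chain.injEq]
  tauto

lemma chainIdx_π₂ : chainIdx V 1 .π₂ = (· + 1) '' chainIdx V 1 .π₁ := by
  ext j
  cases j with
  | zero => simp [chainIdx, MFU.π₂, sat_α₀]
  | succ j => simpa [mem_chainIdx one_le_two] using sat_π₂_chain_succ

lemma chainIdx_τ₂ : chainIdx V 2 .τ₂ = (· + 1) '' chainIdx V 2 .τ₁ := by
  ext j
  cases j with
  | zero => simp [chainIdx, MFU.τ₂, sat_α₀]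
  | succ j => simpa [mem_chainIdx le_rfl] using sat_τ₂_chain_succ

lemma sat_dia_and_not_dia_dia_iff_isLeast {p : Pt} {hp : Pt.Ok P c₀ p} {i c : ℕ} {A : MFU}
    (hA : OnChain V i A) (h₁ : ∀ j, TransGen Pt.R0 p (.chain i j) ↔ j ≤ c)
    (h₂ : ∀ j, (∃ q, TransGen Pt.R0 p q ∧ TransGen Pt.R0 q (.chain i j)) ↔ j < c) :
    (satU (FR P c₀) V (FW.mk p hp) (.dia A) ∧ ¬ satU (FR P c₀) V (FW.mk p hp) (.dia (.dia A))) ↔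
      IsLeast (chainIdx V i A) c := by
  have hdia : satU (FR P c₀) V (FW.mk p hp) (.dia A) ↔ ∃ j ≤ c, j ∈ chainIdx V i A := by
    simp only [sat_mk_dia]
    constructor
    · rintro ⟨q, hq, hqA⟩
      obtain ⟨j, rfl⟩ := hA _ _ hqA
      exact ⟨j, (h₁ j).1 hq, _, hqA⟩
    · rintro ⟨j, hj, hjA⟩
      exact ⟨_, (h₁ j).2 hj, hjA.2⟩
  have hdia₂ : satU (FR P c₀) V (FW.mk p hp) (.dia (.dia A)) ↔ ∃ j < c, j ∈ chainIdx V i A := by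
    simp only [sat_mk_dia]
    constructor
    · rintro ⟨q, hq, r, hr, hrA⟩
      obtain ⟨j, rfl⟩ := hA _ _ hrA
      exact ⟨j, (h₂ j).1 ⟨q, hq, hr⟩, _, hrA⟩
    · rintro ⟨j, hj, hjA⟩
      obtain ⟨q, hq, hr⟩ := (h₂ j).2 hj
      exact ⟨q, hq, _, hr, hjA.2⟩
  rw [hdia, hdia₂, isLeast_iff_exists_le_forall_lt]
  simp

lemma sat_eps_iff {p : Pt} {hp : Pt.Ok P c₀ p} {t : ℕ} {A B : MFU}
    (hA : OnChain V 1 A) (hB : OnChain V 2 B) :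
    satU (FR P c₀) V (FW.mk p hp) (.eps t A B) ↔
      ∃ k l, p = .e t k l ∧ IsLeast (chainIdx V 1 A) k ∧ IsLeast (chainIdx V 2 B) l := by
  have least₁ : ∀ k l (hp : Pt.Ok P c₀ (.e t k l)), _ := fun k l hp =>
    sat_dia_and_not_dia_dia_iff_isLeast (hp := hp) (c := k) hA (by simp) (by simp)
  have least₂ : ∀ k l (hp : Pt.Ok P c₀ (.e t k l)), _ := fun k l hp =>
    sat_dia_and_not_dia_dia_iff_isLeast (hp := hp) (c := l) hB (by simp) (by simp)
  simp only [MFU.eps, satU_and, satU_neg]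
  constructor
  · rintro ⟨ht, ht', hA₁, hA₂, hB₁, hB₂⟩
    obtain ⟨k, l, rfl⟩ : ∃ k l, p = .e t k l := by
      obtain ⟨q, hq, hqA⟩ := sat_mk_dia.1 hA₁
      obtain ⟨j, rfl⟩ := hA _ _ hqA
      simp only [sat_mk_dia, sat_alpha] at ht ht'
      cases p with
      | e t' k l => simp at ht ht'; exact ⟨k, l, by rw [show t' = t by omega]⟩
      | chain i' j' => obtain rfl | rfl | rfl := Pt.chain_index hp <;> simp at ht hq
      | _ => simp at ht
    exact ⟨k, l, rfl, (least₁ k l hp).1 ⟨hA₁, hA₂⟩, (least₂ k l hp).1 ⟨hB₁, hB₂⟩⟩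
  · rintro ⟨k, l, rfl, hk, hl⟩
    obtain ⟨hA₁, hA₂⟩ := (least₁ k l hp).2 hk
    obtain ⟨hB₁, hB₂⟩ := (least₂ k l hp).2 hl
    exact ⟨by simp [sat_alpha], by simp [sat_alpha], hA₁, hA₂, hB₁, hB₂⟩

lemma sat_imp_uEx_eps {x : FW P c₀} {s s' : ℕ} {A B A' B' : MFU}
    (hA : OnChain V 1 A) (hB : OnChain V 2 B) (hA' : OnChain V 1 A') (hB' : OnChain V 2 B')
    (h : ∀ k l, Reach P c₀ (s, k, l) → IsLeast (chainIdx V 1 A) k → IsLeast (chainIdx V 2 B) l →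
      ∃ k' l', Reach P c₀ (s', k', l') ∧ IsLeast (chainIdx V 1 A') k' ∧
        IsLeast (chainIdx V 2 B') l') :
    satU (FR P c₀) V x (.imp (.uEx (.eps s A B)) (.uEx (.eps s' A' B'))) := by
  simp only [satU_imp, satU_uEx]
  rintro ⟨y, hy⟩
  induction y using FW.ind with | h p hp => ?_
  obtain ⟨k, l, rfl, hk, hl⟩ := (sat_eps_iff hA hB).1 hy
  obtain ⟨k', l', hr, hk', hl'⟩ := h k l hp hk hl
  exact ⟨FW.mk (.e s' k' l') hr, (sat_eps_iff hA' hB').2 ⟨k', l', rfl, hk', hl'⟩⟩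

lemma sat_AxI {I : Instr} (hI : I ∈ P) (x : FW P c₀) : satU (FR P c₀) V x (AxI I) := by
  have step {c c'} (h : I.Step c c') (hr : Reach P c₀ c) : Reach P c₀ c' := hr.tail ⟨I, hI, h⟩
  cases I with
  | inc1 s s' =>
    refine sat_imp_uEx_eps onChain_π₁ onChain_τ₁ onChain_π₂ onChain_τ₁ fun k l hr hk hl => ?_
    exact ⟨k + 1, l, step ⟨rfl, rfl⟩ hr, by rwa [chainIdx_π₂, isLeast_image_add_one], hl⟩
  | inc2 s s' =>
    refine sat_imp_uEx_eps onChain_π₁ onChain_τ₁ onChain_π₁ onChain_τ₂ fun k l hr hk hl => ?_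
    exact ⟨k, l + 1, step ⟨rfl, rfl⟩ hr, hk, by rwa [chainIdx_τ₂, isLeast_image_add_one]⟩
  | dec1 s s' s'' =>
    refine satU_and.2 ⟨sat_imp_uEx_eps onChain_π₂ onChain_τ₁ onChain_π₁ onChain_τ₁
      fun k l hr hk hl => ?_, sat_imp_uEx_eps (onChain_alpha 1 0) onChain_τ₁ (onChain_alpha 1 0)
      onChain_τ₁ fun k l hr hk hl => ?_⟩
    · rw [chainIdx_π₂] at hk
      obtain ⟨k, -, rfl⟩ := hk.1
      exact ⟨k, l, step ⟨rfl, .inl ⟨k.succ_ne_zero, rfl⟩⟩ hr, isLeast_image_add_one.1 hk, hl⟩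
    · obtain rfl := (isLeast_chainIdx_alpha (j := 0) one_le_two).1 hk
      exact ⟨0, l, step ⟨rfl, .inr ⟨rfl, rfl⟩⟩ hr, hk, hl⟩
  | dec2 s s' s'' =>
    refine satU_and.2 ⟨sat_imp_uEx_eps onChain_π₁ onChain_τ₂ onChain_π₁ onChain_τ₁
      fun k l hr hk hl => ?_, sat_imp_uEx_eps onChain_π₁ (onChain_alpha 2 0) onChain_π₁
      (onChain_alpha 2 0) fun k l hr hk hl => ?_⟩
    · rw [chainIdx_τ₂] at hl
      obtain ⟨l, -, rfl⟩ := hl.1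
      exact ⟨k, l, step ⟨rfl, .inl ⟨l.succ_ne_zero, rfl⟩⟩ hr, hk, isLeast_image_add_one.1 hl⟩
    · obtain rfl := (isLeast_chainIdx_alpha (j := 0) le_rfl).1 hl
      exact ⟨k, 0, step ⟨rfl, .inr ⟨rfl, rfl⟩⟩ hr, hk, hl⟩

lemma sat_AxP (x : FW P c₀) : satU (FR P c₀) V x (AxP P) := by
  rw [AxP, satU_foldr_and, List.forall_mem_map]
  exact fun I hI => sat_AxI hI x

lemma not_sat_psiB {s m n t k l : ℕ} {V : ℕ → FW P (s, m, n) → Prop}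
    (hnr : ¬ Reach P (s, m, n) (t, k, l)) (x : FW P (s, m, n)) :
    ¬ satU (FR P (s, m, n)) V x (psiB P s m n t k l) := by
  simp only [psiB, satU_imp, satU_and, satU_uEx, Classical.not_imp]
  refine ⟨⟨sat_AxP x, FW.mk (.e s m n) .refl,
    (sat_eps_iff (onChain_alpha 1 m) (onChain_alpha 2 n)).2 ⟨m, n, rfl,
      (isLeast_chainIdx_alpha one_le_two).2 rfl, (isLeast_chainIdx_alpha le_rfl).2 rfl⟩⟩, ?_⟩
  rintro ⟨y, hy⟩
  induction y using FW.ind with | h p hp => ?_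
  obtain ⟨k', l', rfl, hk, hl⟩ := (sat_eps_iff (onChain_alpha 1 k) (onChain_alpha 2 l)).1 hy
  rw [(isLeast_chainIdx_alpha one_le_two).1 hk, (isLeast_chainIdx_alpha le_rfl).1 hl] at hp
  exact hnr hp

end Frame

/-- if 𝔟 is not reachable from 𝔞, then ψ(𝔟) is not unifiable in any L with
K_u ⊆ L ⊆ K4_u. -/
theorem psiB_not_unifiable :
    ∀ (P : List Instr) (s m n t k l : Nat) (L : Set MFU),
      Deterministic P → Ku ⊆ L → L ⊆ K4u →
      ¬ Reach P (s, m, n) (t, k, l) →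
      ∀ σ, MFU.subst σ (psiB P s m n t k l) ∉ L := by
  intro P s m n t k l L _ _ hL hnr σ hσ
  have h := hL hσ (FW P (s, m, n)) (FR P (s, m, n)) transitive_FR (fun _ _ => False)
    (FW.mk .a trivial)
  rw [satU_subst] at h
  exact not_sat_psiB hnr _ h
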